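/- Define A(τ) = Δ₁(τ) + τ(1+γ₁(τ)) + ε·exp(−(τ+Δ₂(τ))/ε)·(1+γ₂(τ)) − ε·exp(−Δ₂(τ)/ε)·γ₂(τ) + exp((Δ₁(τ)−Δ₂(τ))/ε)·[τ(γ₂(τ)−γ₁(τ)) − ε]. If Δ₁(τ) = a + b₁τ^ω, Δ₂(τ) = a + b₂τ^ω with a > 0, 0 < b₁ ≤ b₂, 0 < ω < 1, γᵢ = Δᵢ', and ε > 0, then A(τ) > 0 for every τ > 0. -/

import Mathlib

set_option maxHeartbeats 1000000

theorem A_pos (ε a b₁ b₂ ω : ℝ)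
    (hε : 0 < ε) (ha : 0 < a) (hb₁ : 0 < b₁) (hb : b₁ ≤ b₂)
    (hω₀ : 0 < ω) (hω₁ : ω < 1) :
    ∀ τ : ℝ, 0 < τ →
      (let Δ₁ := a + b₁ * τ ^ ω
       let Δ₂ := a + b₂ * τ ^ ω
       let γ₁ := ω * b₁ * τ ^ (ω - 1)
       let γ₂ := ω * b₂ * τ ^ (ω - 1)
       0 < Δ₁ + τ * (1 + γ₁) + ε * Real.exp (-(τ + Δ₂) / ε) * (1 + γ₂)
           - ε * Real.exp (-Δ₂ / ε) * γ₂
           + Real.exp ((Δ₁ - Δ₂) / ε) * (τ * (γ₂ - γ₁) - ε)) := by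
  intro τ hτ
  dsimp only
  set d1 : ℝ := a + b₁ * τ ^ ω with hd1def
  set d2 : ℝ := a + b₂ * τ ^ ω with hd2def
  set g1 : ℝ := ω * b₁ * τ ^ (ω - 1) with hg1def
  set g2 : ℝ := ω * b₂ * τ ^ (ω - 1) with hg2def
  have htω : 0 < τ ^ ω := Real.rpow_pos_of_pos hτ ω
  have hts : 0 < τ ^ (ω - 1) := Real.rpow_pos_of_pos hτ (ω - 1)
  have hd1 : 0 < d1 := by positivity
  have hd2 : 0 < d2 := by nlinarith
  have hd12 : d1 ≤ d2 := by nlinarith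
  have hg1p : 0 < g1 := by positivity
  have hg2p : 0 < g2 := by nlinarith
  have hg12 : g1 ≤ g2 := by nlinarith
  set e1 : ℝ := Real.exp ((d1 - d2) / ε) with he1def
  set e2 : ℝ := Real.exp (-d2 / ε) with he2def
  set e3 : ℝ := Real.exp (-(τ + d2) / ε) with he3def
  have he1p : 0 < e1 := Real.exp_pos _
  have he2p : 0 < e2 := Real.exp_pos _
  have he3p : 0 < e3 := Real.exp_pos _
  have he1le : e1 ≤ 1 := by
    rw [he1def, Real.exp_le_one_iff]
    apply div_nonpos_of_nonpos_of_nonneg <;> linarith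
  have he21 : e2 ≤ e1 := by
    rw [he2def, he1def, Real.exp_le_exp]
    apply div_le_div_of_nonneg_right _ hε.le
    linarith
  -- e3 = e1 * exp(-(τ+d1)/ε)
  have hsplit1 : e3 = e1 * Real.exp (-((τ + d1) / ε)) := by
    rw [he3def, he1def, ← Real.exp_add]
    congr 1
    field_simp
    ring
  have hsplit2 : e3 = e2 * Real.exp (-(τ / ε)) := by
    rw [he3def, he2def, ← Real.exp_add]
    congr 1
    field_simp
    ring
  have hτd1 : τ + d1 = ε * ((τ + d1) / ε) := (mul_div_cancel₀ _ hε.ne').symm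
  have hτε : τ = ε * (τ / ε) := (mul_div_cancel₀ _ hε.ne').symm
  -- key1 : ε * e1 - e1 * (τ + d1) ≤ ε * e3
  have hx1 : 1 - (τ + d1) / ε ≤ Real.exp (-((τ + d1) / ε)) := by
    have := Real.add_one_le_exp (-((τ + d1) / ε)); linarith
  have key1 : ε * e1 - e1 * (τ + d1) ≤ ε * e3 := by
    rw [hsplit1]
    calc ε * e1 - e1 * (τ + d1) = ε * e1 * (1 - (τ + d1) / ε) := by
          rw [hτd1]; field_simp
      _ ≤ ε * e1 * Real.exp (-((τ + d1) / ε)) := by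
          apply mul_le_mul_of_nonneg_left hx1 (by positivity)
      _ = ε * (e1 * Real.exp (-((τ + d1) / ε))) := by ring
  -- key2 : ε * g2 * e2 - τ * g2 * e2 < ε * g2 * e3  (strict)
  have hx2 : 1 - τ / ε < Real.exp (-(τ / ε)) := by
    have hne : -(τ / ε) ≠ 0 := by
      have : 0 < τ / ε := div_pos hτ hε
      linarith
    have := Real.add_one_lt_exp hne; linarith
  have key2 : ε * g2 * e2 - τ * g2 * e2 < ε * g2 * e3 := by
    rw [hsplit2]
    calc ε * g2 * e2 - τ * g2 * e2 = ε * g2 * e2 * (1 - τ / ε) := by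
          rw [hτε]; field_simp
      _ < ε * g2 * e2 * Real.exp (-(τ / ε)) := by
          apply mul_lt_mul_of_pos_left hx2 (by positivity)
      _ = ε * g2 * (e2 * Real.exp (-(τ / ε))) := by ring
  nlinarith [mul_nonneg (sub_nonneg.mpr he1le) (by nlinarith : (0:ℝ) ≤ d1 + τ + τ * g1),
             mul_nonneg (sub_nonneg.mpr he21) (by nlinarith : (0:ℝ) ≤ τ * g2),
             key1, key2]
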